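/- arXiv:2309.12384 — 2 statements merged into one kernel-verified Lean document; each statement's English description precedes it below -/
import Mathlib

section
/- Assume the mesh conditions k_r·|θ_r − x_p|·Δx ≤ σ_r² for every p ∈ S and every r ∈ 𝓡 (the paper states this as Δx ≤ σ_r²/(k_r θ_r) for all r) and λ·Δt·Î ≤ 1. Then the regime-switching scheme is stable: every solution (Φ^q) satisfies max_{p∈P, r∈𝓡} |Φ^q_{p,r}| ≤ max_{p∈P, r∈𝓡} |Φ^0_{p,r}| for every q = 0,…,T_max. (Paper: stability part of the Lemma on the regime-switching scheme.) -/
/-!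
Discrete maximum principle. Under the mesh conditions every off-diagonal coefficient of the
implicit operator is nonnegative and the diagonal is `1 + Δt` times their sum, so at a point where
`|Φ^{q+1}|` is maximal the implicit row gives `|Φ^{q+1}| ≤ |right-hand side|`. The right-hand side
is a combination of values of `Φ^q` with nonnegative weights summing to one (this is where
`λ Δt Î ≤ 1` enters), hence bounded by `max |Φ^q|`. Boundary rows copy `Φ^q`.
-/

open Finset

theorem Finset.forall_le_of_forall_max_le {ι α : Type*} [LinearOrder α] {s : Finset ι}
    {f : ι → α} {M : α} (h : ∀ i ∈ s, (∀ j ∈ s, f j ≤ f i) → f i ≤ M) :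
    ∀ i ∈ s, f i ≤ M := by
  intro i hi
  obtain ⟨i₀, hi₀, hmax⟩ := s.exists_max_image f ⟨i, hi⟩
  exact (hmax i hi).trans (h i₀ hi₀ hmax)

theorem abs_sum_mul_le {ι : Type*} (s : Finset ι) {w v : ι → ℝ} {B : ℝ}
    (hw : ∀ i ∈ s, 0 ≤ w i) (hv : ∀ i ∈ s, |v i| ≤ B) :
    |∑ i ∈ s, w i * v i| ≤ (∑ i ∈ s, w i) * B := by
  calc |∑ i ∈ s, w i * v i| ≤ ∑ i ∈ s, |w i * v i| := abs_sum_le_sum_abs _ _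
    _ ≤ ∑ i ∈ s, w i * B := sum_le_sum fun i hi => by
        rw [abs_mul, abs_of_nonneg (hw i hi)]
        exact mul_le_mul_of_nonneg_left (hv i hi) (hw i hi)
    _ = (∑ i ∈ s, w i) * B := (sum_mul _ _ _).symm

theorem abs_le_of_one_add_mul_sub_eq {W y off g : ℝ} (hW : 0 ≤ W) (hoff : |off| ≤ W * |y|)
    (h : (1 + W) * y - off = g) : |y| ≤ |g| := by
  have : (1 + W) * |y| ≤ W * |y| + |g| := by
    calc (1 + W) * |y| = |off + g| := by
          rw [← h, add_sub_cancel, abs_mul, abs_of_nonneg (show 0 ≤ 1 + W by linarith)]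
      _ ≤ W * |y| + |g| := (abs_add_le _ _).trans (by linarith)
  linarith

theorem abs_le_abs_of_implicit_row_eq {ι : Type*} (s : Finset ι) {w z : ι → ℝ}
    {a b c Δt y yl yr g : ℝ}
    (hc : 0 ≤ c) (hb : 0 ≤ b) (hΔt : 0 ≤ Δt) (hw : ∀ j ∈ s, 0 ≤ w j)
    (ha : a = c + b + ∑ j ∈ s, w j)
    (hyl : |yl| ≤ |y|) (hyr : |yr| ≤ |y|) (hz : ∀ j ∈ s, |z j| ≤ |y|)
    (h : -c * Δt * yl + (1 + a * Δt) * y - b * Δt * yr - ∑ j ∈ s, w j * Δt * z j = g) :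
    |y| ≤ |g| := by
  have hoffdiag : |∑ j ∈ s, w j * Δt * z j| ≤ (∑ j ∈ s, w j) * Δt * |y| := by
    rw [sum_mul]
    exact abs_sum_mul_le s (fun j hj => mul_nonneg (hw j hj) hΔt) hz
  refine abs_le_of_one_add_mul_sub_eq (W := a * Δt)
    (off := c * Δt * yl + b * Δt * yr + ∑ j ∈ s, w j * Δt * z j) ?_ ?_ (by linarith)
  · rw [ha]
    exact mul_nonneg (add_nonneg (add_nonneg hc hb) (sum_nonneg hw)) hΔt
  · calc _ ≤ |c * Δt * yl| + |b * Δt * yr| + |∑ j ∈ s, w j * Δt * z j| := abs_add_three _ _ _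
      _ ≤ c * Δt * |y| + b * Δt * |y| + (∑ j ∈ s, w j) * Δt * |y| := by
          rw [abs_mul, abs_mul (b * Δt), abs_of_nonneg (mul_nonneg hc hΔt),
            abs_of_nonneg (mul_nonneg hb hΔt)]
          gcongr
      _ = a * Δt * |y| := by rw [ha]; ring

theorem abs_one_sub_mul_add_mul_sum_le {ι : Type*} (s : Finset ι) {w v : ι → ℝ}
    {μ I y M : ℝ} (hμ : 0 ≤ μ) (hw : ∀ i ∈ s, 0 ≤ w i) (hI : I = ∑ i ∈ s, w i)
    (hμI : μ * I ≤ 1) (hy : |y| ≤ M) (hv : ∀ i ∈ s, |v i| ≤ M) :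
    |(1 - μ * I) * y + μ * ∑ i ∈ s, v i * w i| ≤ M := by
  have hsum := abs_sum_mul_le s hw hv
  simp only [← hI, mul_comm (w _)] at hsum
  calc _ ≤ |(1 - μ * I) * y| + |μ * ∑ i ∈ s, v i * w i| := abs_add_le _ _
    _ ≤ (1 - μ * I) * M + μ * (I * M) := by
        rw [abs_mul, abs_mul, abs_of_nonneg (sub_nonneg.2 hμI), abs_of_nonneg hμ]
        gcongr
    _ = M := by ring

theorem abs_drift_le_diffusion {k d σ Δx : ℝ} (hΔx : 0 < Δx) (hk : 0 ≤ k)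
    (hmesh : k * |d| * Δx ≤ σ ^ 2) : |k * d / (2 * Δx)| ≤ σ ^ 2 / (2 * Δx ^ 2) := by
  rw [abs_div, abs_mul, abs_of_nonneg hk, abs_of_pos (show 0 < 2 * Δx by positivity),
    div_le_div_iff₀ (by positivity) (by positivity)]
  nlinarith

theorem stmt_10_general
    {R : Type*} [Fintype R] [DecidableEq R]
    (Δx Δt lam : ℝ)
    (hΔx : 0 < Δx) (hΔt : 0 < Δt) (hlam : 0 < lam)
    (k θ σ : R → ℝ) (hk : ∀ r, 0 ≤ k r)
    (qm : R → R → ℝ) (hqm : ∀ r j, j ≠ r → 0 ≤ qm r j)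
    (J N : ℕ)
    (fbar : ℤ → ℝ)
    (hfbar : ∀ i ∈ Finset.Icc (-(J / 2 : ℤ)) (J / 2 : ℤ), 0 ≤ fbar i)
    (Ihat : ℝ) (hIhat : Ihat = ∑ i ∈ Finset.Icc (-(J / 2 : ℤ)) (J / 2 : ℤ), fbar i * Δx)
    (P S : Finset ℤ)
    (hP : P = Finset.Icc 0 ((N : ℤ) - 1))
    (hS : S ⊆ Finset.Icc 1 ((N : ℤ) - 2))
    (hSP : ∀ p ∈ S, ∀ i ∈ Finset.Icc (-(J / 2 : ℤ)) (J / 2 : ℤ), p + i ∈ P)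
    (x : ℤ → ℝ)
    (c a b : ℤ → R → ℝ)
    (hc : ∀ p r, c p r = (σ r) ^ 2 / (2 * Δx ^ 2) - k r * (θ r - x p) / (2 * Δx))
    (ha : ∀ p r, a p r = (σ r) ^ 2 / Δx ^ 2 + ∑ j ∈ Finset.univ \ {r}, qm r j)
    (hb : ∀ p r, b p r = (σ r) ^ 2 / (2 * Δx ^ 2) + k r * (θ r - x p) / (2 * Δx))
    (Tmax : ℕ) (Φ : ℕ → ℤ → R → ℝ)
    -- the regime-switching scheme, interior rows
    (hscheme : ∀ q < Tmax, ∀ p ∈ S, ∀ r : R,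
      -(c p r) * Δt * Φ (q + 1) (p - 1) r + (1 + a p r * Δt) * Φ (q + 1) p r
          - b p r * Δt * Φ (q + 1) (p + 1) r
          - ∑ j ∈ Finset.univ \ {r}, qm r j * Δt * Φ (q + 1) p j
        = (1 - lam * Δt * Ihat) * Φ q p r
          + lam * Δt *
            ∑ i ∈ Finset.Icc (-(J / 2 : ℤ)) (J / 2 : ℤ), Φ q (p + i) r * fbar i * Δx)
    -- Dirichlet boundary rows
    (hbdry : ∀ q < Tmax, ∀ p ∈ P \ S, ∀ r : R, Φ (q + 1) p r = Φ q p r)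
    -- mesh conditions
    (hmesh1 : ∀ p ∈ S, ∀ r : R, k r * |θ r - x p| * Δx ≤ (σ r) ^ 2)
    (hmesh2 : lam * Δt * Ihat ≤ 1) :
    ∀ q ≤ Tmax, ∀ M : ℝ, (∀ p ∈ P, ∀ r : R, |Φ 0 p r| ≤ M) →
      ∀ p ∈ P, ∀ r : R, |Φ q p r| ≤ M := by
  intro q hq M hM0
  induction q with
  | zero => exact hM0
  | succ q ih =>
    have hqT : q < Tmax := hq
    have IH := ih hqT.le
    suffices ∀ t ∈ P ×ˢ univ, |Φ (q + 1) t.1 t.2| ≤ M from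
      fun p hp r => this (p, r) (mem_product.2 ⟨hp, mem_univ r⟩)
    refine forall_le_of_forall_max_le fun ⟨p, r⟩ hpr hmax => ?_
    have hp : p ∈ P := (mem_product.1 hpr).1
    have hmax' : ∀ p' ∈ P, ∀ r', |Φ (q + 1) p' r'| ≤ |Φ (q + 1) p r| :=
      fun p' hp' r' => hmax (p', r') (mem_product.2 ⟨hp', mem_univ r'⟩)
    by_cases hpS : p ∈ S
    · have hnbr : p - 1 ∈ P ∧ p + 1 ∈ P := by
        have := mem_Icc.1 (hS hpS)
        subst hP
        simp only [mem_Icc]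
        omega
      have hdrift := abs_le.1 (abs_drift_le_diffusion hΔx (hk r) (hmesh1 p hpS r))
      refine (abs_le_abs_of_implicit_row_eq _ (by rw [hc]; linarith) (by rw [hb]; linarith) hΔt.le
        (fun j hj => hqm r j (by simpa using hj)) (by rw [ha, hb, hc]; field_simp; ring)
        (hmax' _ hnbr.1 r) (hmax' _ hnbr.2 r) (fun j _ => hmax' p hp j)
        (hscheme q hqT p hpS r)).trans ?_
      simp only [mul_assoc (Φ q _ r)]
      exact abs_one_sub_mul_add_mul_sum_le _ (by positivity)
        (fun i hi => mul_nonneg (hfbar i hi) hΔx.le) hIhat hmesh2 (IH p hp r)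
        (fun i hi => IH _ (hSP p hpS i hi) r)
    · rw [hbdry q hqT p (mem_sdiff.2 ⟨hp, hpS⟩) r]
      exact IH p hp r

/-- Stability of the implicit BTCS scheme for the regime-switching
Lévy-driven OU PIDE: under the mesh conditions `k_r·|θ_r - x_p|·Δx ≤ σ_r²` (for all
interior `p` and all regimes `r`) and `λ·Δt·Î ≤ 1`, every solution of the scheme
satisfies `max_{p,r} |Φ^q_{p,r}| ≤ max_{p,r} |Φ^0_{p,r}|` for every `q = 0, …, Tmax`. -/
theorem stmt_10
    {R : Type*} [Fintype R] [DecidableEq R] [Nonempty R]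
    (Δx Δt lam x₀ : ℝ)
    (hΔx : 0 < Δx) (hΔt : 0 < Δt) (hlam : 0 < lam)
    (k θ σ : R → ℝ) (hk : ∀ r, 0 ≤ k r) (hσ : ∀ r, 0 < σ r)
    (qm : R → R → ℝ) (hqm : ∀ r j, j ≠ r → 0 ≤ qm r j)
    (J N : ℕ) (hJ : Even J)
    (fbar : ℤ → ℝ)
    (hfbar : ∀ i ∈ Finset.Icc (-(J / 2 : ℤ)) (J / 2 : ℤ), 0 ≤ fbar i)
    (Ihat : ℝ) (hIhat : Ihat = ∑ i ∈ Finset.Icc (-(J / 2 : ℤ)) (J / 2 : ℤ), fbar i * Δx)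
    (P S : Finset ℤ)
    (hP : P = Finset.Icc 0 ((N : ℤ) - 1))
    (hS : S ⊆ Finset.Icc 1 ((N : ℤ) - 2))
    (hSP : ∀ p ∈ S, ∀ i ∈ Finset.Icc (-(J / 2 : ℤ)) (J / 2 : ℤ), p + i ∈ P)
    (x : ℤ → ℝ) (hx : ∀ p, x p = x₀ + (p : ℝ) * Δx)
    (c a b : ℤ → R → ℝ)
    (hc : ∀ p r, c p r = (σ r) ^ 2 / (2 * Δx ^ 2) - k r * (θ r - x p) / (2 * Δx))
    (ha : ∀ p r, a p r = (σ r) ^ 2 / Δx ^ 2 + ∑ j ∈ Finset.univ \ {r}, qm r j)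
    (hb : ∀ p r, b p r = (σ r) ^ 2 / (2 * Δx ^ 2) + k r * (θ r - x p) / (2 * Δx))
    (Tmax : ℕ) (Φ : ℕ → ℤ → R → ℝ)
    -- the regime-switching scheme, interior rows
    (hscheme : ∀ q < Tmax, ∀ p ∈ S, ∀ r : R,
      -(c p r) * Δt * Φ (q + 1) (p - 1) r + (1 + a p r * Δt) * Φ (q + 1) p r
          - b p r * Δt * Φ (q + 1) (p + 1) r
          - ∑ j ∈ Finset.univ \ {r}, qm r j * Δt * Φ (q + 1) p j
        = (1 - lam * Δt * Ihat) * Φ q p r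
          + lam * Δt *
            ∑ i ∈ Finset.Icc (-(J / 2 : ℤ)) (J / 2 : ℤ), Φ q (p + i) r * fbar i * Δx)
    -- Dirichlet boundary rows
    (hbdry : ∀ q < Tmax, ∀ p ∈ P \ S, ∀ r : R, Φ (q + 1) p r = Φ q p r)
    -- mesh conditions
    (hmesh1 : ∀ p ∈ S, ∀ r : R, k r * |θ r - x p| * Δx ≤ (σ r) ^ 2)
    (hmesh2 : lam * Δt * Ihat ≤ 1) :
    ∀ q ≤ Tmax, ∀ M : ℝ, (∀ p ∈ P, ∀ r : R, |Φ 0 p r| ≤ M) →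
      ∀ p ∈ P, ∀ r : R, |Φ q p r| ≤ M :=
  stmt_10_general Δx Δt lam hΔx hΔt hlam k θ σ hk qm hqm J N fbar hfbar Ihat hIhat P S hP hS hSP x c
    a b hc ha hb Tmax Φ hscheme hbdry hmesh1 hmesh2
end

section
/- Assume λ·Δt·Î ≤ 1. Then, with no condition on the spatial mesh sizes Δx and Δy (the paper calls the scheme 'unconditionally' monotone), the upwinded stochastic-volatility scheme satisfies the discrete comparison principle: if (Φ^q) and (Φ̃^q) are two solutions with Φ^0_{p,j} ≥ Φ̃^0_{p,j} for all p ∈ P and 0 ≤ j ≤ V−1, then Φ^q_{p,j} ≥ Φ̃^q_{p,j} for all p ∈ P, 0 ≤ j ≤ V−1 and all q = 0,…,T_max. (Paper: monotonicity part of the Lemma on the stochastic volatility scheme.) -/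
/-!
The difference `Φ - Φ̃` of two solutions solves the same linear scheme. The explicit jump step
maps nonnegative data to nonnegative data as soon as `λΔtÎ ≤ 1`, since the weights `f̄ᵢ` are
nonnegative. The implicit step is inverse-positive for every `Δx, Δy > 0`: upwinding makes all
off-diagonal coefficients `c, b, e, f` nonnegative with `b + c + e + f ≤ a`, so at a minimum of
the new difference its value `m` satisfies `(1 + (a - b - c - e - f)Δt) m ≥ 0`, hence `m ≥ 0`.
Induction on `q` concludes.
-/

open Finset

theorem Finset.forall_le_of_isMinOn_imp_le {ι α : Type*} [LinearOrder α] {s : Finset ι}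
    {u : ι → α} {c : α} (h : ∀ z ∈ s, IsMinOn u s z → c ≤ u z) : ∀ z ∈ s, c ≤ u z := by
  intro z hz
  obtain ⟨m, hm, hmin⟩ := s.exists_min_image u ⟨z, hz⟩
  exact (h m hm (isMinOn_iff.2 hmin)).trans (hmin z hz)

theorem nonneg_of_stencil_nonneg {κ : Type*} {t : Finset κ} {w v : κ → ℝ} {m A τ : ℝ}
    (hτ : 0 ≤ τ) (hw : ∀ i ∈ t, 0 ≤ w i) (hv : ∀ i ∈ t, 0 < w i → m ≤ v i)
    (hA : ∑ i ∈ t, w i ≤ A) (h : 0 ≤ (1 + A * τ) * m - τ * ∑ i ∈ t, w i * v i) : 0 ≤ m := by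
  have hwv : (∑ i ∈ t, w i) * m ≤ ∑ i ∈ t, w i * v i := by
    rw [sum_mul]
    refine sum_le_sum fun i hi => ?_
    rcases (hw i hi).eq_or_lt with h0 | hpos
    · simp [← h0]
    · exact mul_le_mul_of_nonneg_left (hv i hi hpos) hpos.le
  by_contra! hm
  nlinarith [mul_le_mul_of_nonneg_left hwv hτ, mul_nonneg (sub_nonneg.2 hA) hτ]

section Upwind

variable {p q : Prop} [Decidable p] [Decidable q] {d h : ℝ}

theorem ite_div_nonneg_of_imp (hh : 0 ≤ h) (hd : p → 0 ≤ d) :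
    0 ≤ if p then d / h else 0 := by
  split_ifs with hp
  exacts [div_nonneg (hd hp) hh, le_rfl]

theorem ite_div_nonpos_of_imp (hh : 0 ≤ h) (hd : p → d ≤ 0) :
    (if p then d / h else 0) ≤ 0 := by
  split_ifs with hp
  exacts [div_nonpos_of_nonpos_of_nonneg (hd hp) hh, le_rfl]

theorem ite_div_sub_ite_div_le_abs_div (hh : 0 ≤ h) :
    ((if p then d / h else 0) - if q then d / h else 0) ≤ |d| / h := by
  have hpos : d / h ≤ |d| / h := div_le_div_of_nonneg_right (le_abs_self d) hh
  have hneg : -(d / h) ≤ |d| / h := by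
    rw [← neg_div]; exact div_le_div_of_nonneg_right (neg_le_abs d) hh
  have habs : 0 ≤ |d| / h := by positivity
  split_ifs with h₁ h₂ <;> linarith

end Upwind

def implicitOp (c a b e f : ℤ → ℤ → ℝ) (Δt : ℝ) (v : ℤ → ℤ → ℝ) (p j : ℤ) : ℝ :=
  -(c p j) * Δt * v (p - 1) j + (1 + a p j * Δt) * v p j - b p j * Δt * v (p + 1) j
    - e p j * Δt * v p (j - 1) - f p j * Δt * v p (j + 1)

def explicitJumpOp (lam Δt Ihat Δx : ℝ) (I : Finset ℤ) (fbar : ℤ → ℝ) (u : ℤ → ℤ → ℝ)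
    (p j : ℤ) : ℝ :=
  (1 - lam * Δt * Ihat) * u p j + lam * Δt * ∑ i ∈ I, u (p + i) j * fbar i * Δx

theorem implicitOp_sub (c a b e f : ℤ → ℤ → ℝ) (Δt : ℝ) (u v : ℤ → ℤ → ℝ) (p j : ℤ) :
    implicitOp c a b e f Δt (u - v) p j
      = implicitOp c a b e f Δt u p j - implicitOp c a b e f Δt v p j := by
  simp only [implicitOp, Pi.sub_apply]
  ring

theorem explicitJumpOp_sub (lam Δt Ihat Δx : ℝ) (I : Finset ℤ) (fbar : ℤ → ℝ)
    (u v : ℤ → ℤ → ℝ) (p j : ℤ) :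
    explicitJumpOp lam Δt Ihat Δx I fbar (u - v) p j
      = explicitJumpOp lam Δt Ihat Δx I fbar u p j
        - explicitJumpOp lam Δt Ihat Δx I fbar v p j := by
  simp only [explicitJumpOp, Pi.sub_apply, sub_mul, sum_sub_distrib]
  ring

theorem explicitJumpOp_nonneg {lam Δt Ihat Δx : ℝ} {I : Finset ℤ} {fbar : ℤ → ℝ}
    {u : ℤ → ℤ → ℝ} {p j : ℤ} (hlam : 0 ≤ lam) (hΔt : 0 ≤ Δt) (hΔx : 0 ≤ Δx)
    (hmesh : lam * Δt * Ihat ≤ 1) (hfbar : ∀ i ∈ I, 0 ≤ fbar i) (hu : 0 ≤ u p j)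
    (hnbr : ∀ i ∈ I, 0 ≤ u (p + i) j) : 0 ≤ explicitJumpOp lam Δt Ihat Δx I fbar u p j :=
  add_nonneg (mul_nonneg (sub_nonneg.2 hmesh) hu) <| mul_nonneg (mul_nonneg hlam hΔt) <|
    sum_nonneg fun i hi => mul_nonneg (mul_nonneg (hnbr i hi) (hfbar i hi)) hΔx

structure IsMonotoneStencil (P S V : Finset ℤ) (c a b e f : ℤ → ℤ → ℝ) : Prop where
  sub_one_mem : ∀ p ∈ S, p - 1 ∈ P
  add_one_mem : ∀ p ∈ S, p + 1 ∈ P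
  c_nonneg : ∀ p ∈ S, ∀ j ∈ V, 0 ≤ c p j
  b_nonneg : ∀ p ∈ S, ∀ j ∈ V, 0 ≤ b p j
  e_nonneg : ∀ p ∈ S, ∀ j ∈ V, 0 ≤ e p j
  f_nonneg : ∀ p ∈ S, ∀ j ∈ V, 0 ≤ f p j
  sum_le : ∀ p ∈ S, ∀ j ∈ V, c p j + b p j + e p j + f p j ≤ a p j
  sub_one_mem_of_e_pos : ∀ p ∈ S, ∀ j ∈ V, 0 < e p j → j - 1 ∈ V
  add_one_mem_of_f_pos : ∀ p ∈ S, ∀ j ∈ V, 0 < f p j → j + 1 ∈ V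

theorem IsMonotoneStencil.nonneg_of_implicitOp_nonneg {P S V : Finset ℤ}
    {c a b e f : ℤ → ℤ → ℝ} {Δt : ℝ} {v : ℤ → ℤ → ℝ}
    (hst : IsMonotoneStencil P S V c a b e f) (hΔt : 0 ≤ Δt)
    (hint : ∀ p ∈ S, ∀ j ∈ V, 0 ≤ implicitOp c a b e f Δt v p j)
    (hbdry : ∀ p ∈ P \ S, ∀ j ∈ V, 0 ≤ v p j) :
    ∀ p ∈ P, ∀ j ∈ V, 0 ≤ v p j := by
  suffices key : ∀ z ∈ P ×ˢ V, 0 ≤ v z.1 z.2 from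
    fun p hp j hj => key (p, j) (mem_product.2 ⟨hp, hj⟩)
  refine forall_le_of_isMinOn_imp_le fun ⟨p, j⟩ hz hmin => ?_
  obtain ⟨hp, hj⟩ := mem_product.1 hz
  by_cases hpS : p ∈ S
  · have hle : ∀ p' ∈ P, ∀ j' ∈ V, v p j ≤ v p' j' := fun p' hp' j' hj' =>
      isMinOn_iff.1 hmin (p', j') (mem_coe.2 (mem_product.2 ⟨hp', hj'⟩))
    refine nonneg_of_stencil_nonneg (t := univ) (w := ![c p j, b p j, e p j, f p j])
      (v := ![v (p - 1) j, v (p + 1) j, v p (j - 1), v p (j + 1)]) (A := a p j) hΔt ?_ ?_ ?_ ?_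
    · intro i _
      fin_cases i
      exacts [hst.c_nonneg p hpS j hj, hst.b_nonneg p hpS j hj, hst.e_nonneg p hpS j hj,
        hst.f_nonneg p hpS j hj]
    · intro i _ hpos
      fin_cases i
      exacts [hle _ (hst.sub_one_mem p hpS) j hj, hle _ (hst.add_one_mem p hpS) j hj,
        hle p hp _ (hst.sub_one_mem_of_e_pos p hpS j hj hpos),
        hle p hp _ (hst.add_one_mem_of_f_pos p hpS j hj hpos)]
    · simpa [Fin.sum_univ_four] using hst.sum_le p hpS j hj
    · have := hint p hpS j hj
      simp only [implicitOp] at this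
      simp only [Fin.sum_univ_four, Fin.isValue, Matrix.cons_val_zero, Matrix.cons_val_one,
        Matrix.cons_val]
      linarith
  · exact hbdry p (mem_sdiff.2 ⟨hp, hpS⟩) j hj

theorem isMonotoneStencil_of_upwind {Δx Δy k θ κ μ ξ : ℝ} {N V : ℕ} {P S Vset : Finset ℤ}
    {x y : ℤ → ℝ} {c a b e f : ℤ → ℤ → ℝ} (hΔx : 0 ≤ Δx) (hΔy : 0 ≤ Δy)
    (hP : P = Icc 0 ((N : ℤ) - 1)) (hS : S ⊆ Icc 1 ((N : ℤ) - 2))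
    (hy : ∀ j, y j = (j : ℝ) * Δy) (hV' : Vset = Icc 0 ((V : ℤ) - 1))
    (hc : ∀ p j, c p j = y j / (2 * Δx ^ 2)
        - (if k * (θ - x p) < 0 then k * (θ - x p) / Δx else 0))
    (ha : ∀ p j, a p j = y j / Δx ^ 2 + ξ ^ 2 * y j / Δy ^ 2
        + |k * (θ - x p)| / Δx + |κ * (μ - y j)| / Δy)
    (hb : ∀ p j, b p j = y j / (2 * Δx ^ 2)
        + (if 0 < k * (θ - x p) then k * (θ - x p) / Δx else 0))
    (he : ∀ p j, e p j = (if j ≠ (V : ℤ) - 1 then ξ ^ 2 * y j / (2 * Δy ^ 2) else 0)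
        + (if j = (V : ℤ) - 1 then ξ ^ 2 * y j / Δy ^ 2 else 0)
        - (if κ * (μ - y j) < 0 ∧ 0 < j ∧ j < (V : ℤ) - 1
            then κ * (μ - y j) / Δy else 0))
    (hf : ∀ p j, f p j = (if j ≠ (V : ℤ) - 1 then ξ ^ 2 * y j / (2 * Δy ^ 2) else 0)
        + (if 0 < κ * (μ - y j) ∧ j ≠ (V : ℤ) - 1 then κ * (μ - y j) / Δy else 0)) :
    IsMonotoneStencil P S Vset c a b e f := by
  have hy_nonneg : ∀ j ∈ Vset, 0 ≤ y j := fun j hj => by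
    rw [hV', mem_Icc] at hj
    rw [hy]
    exact mul_nonneg (by exact_mod_cast hj.1) hΔy
  have hy_zero : y 0 = 0 := by simp [hy]
  refine ⟨fun p hp => ?_, fun p hp => ?_, fun p _ j hj => ?_, fun p _ j hj => ?_,
    fun p _ j hj => ?_, fun p _ j hj => ?_, fun p _ j hj => ?_, fun p _ j hj hpos => ?_,
    fun p _ j hj hpos => ?_⟩
  · have := mem_Icc.1 (hS hp); rw [hP, mem_Icc]; omega
  · have := mem_Icc.1 (hS hp); rw [hP, mem_Icc]; omega
  · have hdiff : 0 ≤ y j / (2 * Δx ^ 2) := div_nonneg (hy_nonneg j hj) (by positivity)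
    have hdrift := ite_div_nonpos_of_imp (p := k * (θ - x p) < 0) hΔx le_of_lt
    rw [hc]; linarith
  · have hdiff : 0 ≤ y j / (2 * Δx ^ 2) := div_nonneg (hy_nonneg j hj) (by positivity)
    rw [hb]; exact add_nonneg hdiff (ite_div_nonneg_of_imp hΔx le_of_lt)
  · have hyj := hy_nonneg j hj
    have hdrift := ite_div_nonpos_of_imp (p := κ * (μ - y j) < 0 ∧ 0 < j ∧ j < (V : ℤ) - 1)
      hΔy fun h => h.1.le
    rw [he]
    have : 0 ≤ (if j ≠ (V : ℤ) - 1 then ξ ^ 2 * y j / (2 * Δy ^ 2) else 0)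
        + (if j = (V : ℤ) - 1 then ξ ^ 2 * y j / Δy ^ 2 else 0) := by
      apply add_nonneg <;> apply ite_nonneg <;> positivity
    linarith
  · have hyj := hy_nonneg j hj
    rw [hf]
    refine add_nonneg ?_ (ite_div_nonneg_of_imp hΔy fun h => h.1.le)
    apply ite_nonneg <;> positivity
  · have hdrift_x := ite_div_sub_ite_div_le_abs_div (p := 0 < k * (θ - x p))
      (q := k * (θ - x p) < 0) (d := k * (θ - x p)) hΔx
    have hdrift_y := ite_div_sub_ite_div_le_abs_div (p := 0 < κ * (μ - y j) ∧ j ≠ (V : ℤ) - 1)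
      (q := κ * (μ - y j) < 0 ∧ 0 < j ∧ j < (V : ℤ) - 1) (d := κ * (μ - y j)) hΔy
    have hdiff_y : ((if j ≠ (V : ℤ) - 1 then ξ ^ 2 * y j / (2 * Δy ^ 2) else 0)
        + (if j = (V : ℤ) - 1 then ξ ^ 2 * y j / Δy ^ 2 else 0))
        + (if j ≠ (V : ℤ) - 1 then ξ ^ 2 * y j / (2 * Δy ^ 2) else 0)
        = ξ ^ 2 * y j / Δy ^ 2 := by
      rcases eq_or_ne j ((V : ℤ) - 1) with h | h
      · simp [h]
      · simp only [ne_eq, h, not_false_eq_true, ↓reduceIte, add_zero]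
        ring
    have hdiff_x : y j / (2 * Δx ^ 2) + y j / (2 * Δx ^ 2) = y j / Δx ^ 2 := by ring
    rw [hc, ha, hb, he, hf]
    linarith
  · have hj0 : j ≠ 0 := by rintro rfl; simp [he, hy_zero] at hpos
    rw [hV', mem_Icc] at hj ⊢; omega
  · have hjV : j ≠ (V : ℤ) - 1 := by rintro rfl; simp [hf] at hpos
    rw [hV', mem_Icc] at hj ⊢; omega

theorem stmt_13_general
    (Δx Δy Δt k θ κ μ ξ lam : ℝ)
    (hΔx : 0 < Δx) (hΔy : 0 < Δy) (hΔt : 0 < Δt) (hlam : 0 < lam)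
    (J N V : ℕ)
    (fbar : ℤ → ℝ)
    (hfbar : ∀ i ∈ Finset.Icc (-(J / 2 : ℤ)) (J / 2 : ℤ), 0 ≤ fbar i)
    (Ihat : ℝ)
    (P S : Finset ℤ)
    (hP : P = Finset.Icc 0 ((N : ℤ) - 1))
    (hS : S ⊆ Finset.Icc 1 ((N : ℤ) - 2))
    (hSP : ∀ p ∈ S, ∀ i ∈ Finset.Icc (-(J / 2 : ℤ)) (J / 2 : ℤ), p + i ∈ P)
    (x : ℤ → ℝ)
    (y : ℤ → ℝ) (hy : ∀ j, y j = (j : ℝ) * Δy)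
    (Vset : Finset ℤ) (hV' : Vset = Finset.Icc 0 ((V : ℤ) - 1))
    (c a b e f : ℤ → ℤ → ℝ)
    (hc : ∀ p j, c p j = y j / (2 * Δx ^ 2)
        - (if k * (θ - x p) < 0 then k * (θ - x p) / Δx else 0))
    (ha : ∀ p j, a p j = y j / Δx ^ 2 + ξ ^ 2 * y j / Δy ^ 2
        + |k * (θ - x p)| / Δx + |κ * (μ - y j)| / Δy)
    (hb : ∀ p j, b p j = y j / (2 * Δx ^ 2)
        + (if 0 < k * (θ - x p) then k * (θ - x p) / Δx else 0))
    (he : ∀ p j, e p j = (if j ≠ (V : ℤ) - 1 then ξ ^ 2 * y j / (2 * Δy ^ 2) else 0)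
        + (if j = (V : ℤ) - 1 then ξ ^ 2 * y j / Δy ^ 2 else 0)
        - (if κ * (μ - y j) < 0 ∧ 0 < j ∧ j < (V : ℤ) - 1
            then κ * (μ - y j) / Δy else 0))
    (hf : ∀ p j, f p j = (if j ≠ (V : ℤ) - 1 then ξ ^ 2 * y j / (2 * Δy ^ 2) else 0)
        + (if 0 < κ * (μ - y j) ∧ j ≠ (V : ℤ) - 1 then κ * (μ - y j) / Δy else 0))
    (Tmax : ℕ) (Φ Φt : ℕ → ℤ → ℤ → ℝ)
    -- the stochastic-volatility scheme for Φ, interior rows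
    (hscheme : ∀ q < Tmax, ∀ p ∈ S, ∀ j ∈ Vset,
      -(c p j) * Δt * Φ (q + 1) (p - 1) j + (1 + a p j * Δt) * Φ (q + 1) p j
          - b p j * Δt * Φ (q + 1) (p + 1) j
          - e p j * Δt * Φ (q + 1) p (j - 1)
          - f p j * Δt * Φ (q + 1) p (j + 1)
        = (1 - lam * Δt * Ihat) * Φ q p j
          + lam * Δt *
            ∑ i ∈ Finset.Icc (-(J / 2 : ℤ)) (J / 2 : ℤ), Φ q (p + i) j * fbar i * Δx)
    (hbdry : ∀ q < Tmax, ∀ p ∈ P \ S, ∀ j ∈ Vset, Φ (q + 1) p j = Φ q p j)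
    -- the stochastic-volatility scheme for Φ̃, interior rows
    (hscheme' : ∀ q < Tmax, ∀ p ∈ S, ∀ j ∈ Vset,
      -(c p j) * Δt * Φt (q + 1) (p - 1) j + (1 + a p j * Δt) * Φt (q + 1) p j
          - b p j * Δt * Φt (q + 1) (p + 1) j
          - e p j * Δt * Φt (q + 1) p (j - 1)
          - f p j * Δt * Φt (q + 1) p (j + 1)
        = (1 - lam * Δt * Ihat) * Φt q p j
          + lam * Δt *
            ∑ i ∈ Finset.Icc (-(J / 2 : ℤ)) (J / 2 : ℤ), Φt q (p + i) j * fbar i * Δx)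
    (hbdry' : ∀ q < Tmax, ∀ p ∈ P \ S, ∀ j ∈ Vset, Φt (q + 1) p j = Φt q p j)
    -- temporal mesh condition (no condition on Δx, Δy)
    (hmesh : lam * Δt * Ihat ≤ 1)
    -- comparison of initial data
    (hinit : ∀ p ∈ P, ∀ j ∈ Vset, Φt 0 p j ≤ Φ 0 p j) :
    ∀ q ≤ Tmax, ∀ p ∈ P, ∀ j ∈ Vset, Φt q p j ≤ Φ q p j := by
  have hst := isMonotoneStencil_of_upwind hΔx.le hΔy.le hP hS hy hV' hc ha hb he hf
  have hSsubP : S ⊆ P := fun p hp => by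
    have := mem_Icc.1 (hS hp); rw [hP, mem_Icc]; omega
  intro q hq
  induction q with
  | zero => exact hinit
  | succ q ih =>
    have hqT : q < Tmax := by omega
    have ih' := fun p hp j hj => sub_nonneg.2 (ih (by omega) p hp j hj)
    intro p hp j hj
    refine sub_nonneg.1 (hst.nonneg_of_implicitOp_nonneg (v := Φ (q + 1) - Φt (q + 1))
      hΔt.le (fun p hp j hj => ?_) (fun p hp j hj => ?_) p hp j hj)
    · calc 0 ≤ explicitJumpOp lam Δt Ihat Δx (Icc (-(J / 2 : ℤ)) (J / 2)) fbar
              (Φ q - Φt q) p j :=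
            explicitJumpOp_nonneg hlam.le hΔt.le hΔx.le hmesh hfbar
              (ih' p (hSsubP hp) j hj) fun i hi => ih' _ (hSP p hp i hi) j hj
        _ = implicitOp c a b e f Δt (Φ (q + 1) - Φt (q + 1)) p j := by
          rw [explicitJumpOp_sub, implicitOp_sub]
          exact congrArg₂ (· - ·) (hscheme q hqT p hp j hj).symm
            (hscheme' q hqT p hp j hj).symm
    · rw [Pi.sub_apply, Pi.sub_apply, hbdry q hqT p hp j hj, hbdry' q hqT p hp j hj]
      exact ih' p (mem_sdiff.1 hp).1 j hj

/-- Unconditional monotonicity (discrete comparison principle) of the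
upwinded implicit scheme for the stochastic-volatility Lévy-driven OU PIDE: assuming only
`λ·Δt·Î ≤ 1` (no condition on the spatial mesh sizes `Δx`, `Δy`), if two solutions
satisfy `Φ^0 ≥ Φ̃^0` then `Φ^q ≥ Φ̃^q` for all `q = 0, …, Tmax`. -/
theorem stmt_13
    (Δx Δy Δt k θ κ μ ξ lam x₀ : ℝ)
    (hΔx : 0 < Δx) (hΔy : 0 < Δy) (hΔt : 0 < Δt) (hξ : 0 < ξ) (hlam : 0 < lam)
    (J N V : ℕ) (hJ : Even J) (hV : 2 ≤ V)
    (fbar : ℤ → ℝ)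
    (hfbar : ∀ i ∈ Finset.Icc (-(J / 2 : ℤ)) (J / 2 : ℤ), 0 ≤ fbar i)
    (Ihat : ℝ) (hIhat : Ihat = ∑ i ∈ Finset.Icc (-(J / 2 : ℤ)) (J / 2 : ℤ), fbar i * Δx)
    (P S : Finset ℤ)
    (hP : P = Finset.Icc 0 ((N : ℤ) - 1))
    (hS : S ⊆ Finset.Icc 1 ((N : ℤ) - 2))
    (hSP : ∀ p ∈ S, ∀ i ∈ Finset.Icc (-(J / 2 : ℤ)) (J / 2 : ℤ), p + i ∈ P)
    (x : ℤ → ℝ) (hx : ∀ p, x p = x₀ + (p : ℝ) * Δx)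
    (y : ℤ → ℝ) (hy : ∀ j, y j = (j : ℝ) * Δy)
    (Vset : Finset ℤ) (hV' : Vset = Finset.Icc 0 ((V : ℤ) - 1))
    (c a b e f : ℤ → ℤ → ℝ)
    (hc : ∀ p j, c p j = y j / (2 * Δx ^ 2)
        - (if k * (θ - x p) < 0 then k * (θ - x p) / Δx else 0))
    (ha : ∀ p j, a p j = y j / Δx ^ 2 + ξ ^ 2 * y j / Δy ^ 2
        + |k * (θ - x p)| / Δx + |κ * (μ - y j)| / Δy)
    (hb : ∀ p j, b p j = y j / (2 * Δx ^ 2)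
        + (if 0 < k * (θ - x p) then k * (θ - x p) / Δx else 0))
    (he : ∀ p j, e p j = (if j ≠ (V : ℤ) - 1 then ξ ^ 2 * y j / (2 * Δy ^ 2) else 0)
        + (if j = (V : ℤ) - 1 then ξ ^ 2 * y j / Δy ^ 2 else 0)
        - (if κ * (μ - y j) < 0 ∧ 0 < j ∧ j < (V : ℤ) - 1
            then κ * (μ - y j) / Δy else 0))
    (hf : ∀ p j, f p j = (if j ≠ (V : ℤ) - 1 then ξ ^ 2 * y j / (2 * Δy ^ 2) else 0)
        + (if 0 < κ * (μ - y j) ∧ j ≠ (V : ℤ) - 1 then κ * (μ - y j) / Δy else 0))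
    (Tmax : ℕ) (Φ Φt : ℕ → ℤ → ℤ → ℝ)
    -- the stochastic-volatility scheme for Φ, interior rows
    (hscheme : ∀ q < Tmax, ∀ p ∈ S, ∀ j ∈ Vset,
      -(c p j) * Δt * Φ (q + 1) (p - 1) j + (1 + a p j * Δt) * Φ (q + 1) p j
          - b p j * Δt * Φ (q + 1) (p + 1) j
          - e p j * Δt * Φ (q + 1) p (j - 1)
          - f p j * Δt * Φ (q + 1) p (j + 1)
        = (1 - lam * Δt * Ihat) * Φ q p j
          + lam * Δt *
            ∑ i ∈ Finset.Icc (-(J / 2 : ℤ)) (J / 2 : ℤ), Φ q (p + i) j * fbar i * Δx)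
    (hbdry : ∀ q < Tmax, ∀ p ∈ P \ S, ∀ j ∈ Vset, Φ (q + 1) p j = Φ q p j)
    -- the stochastic-volatility scheme for Φ̃, interior rows
    (hscheme' : ∀ q < Tmax, ∀ p ∈ S, ∀ j ∈ Vset,
      -(c p j) * Δt * Φt (q + 1) (p - 1) j + (1 + a p j * Δt) * Φt (q + 1) p j
          - b p j * Δt * Φt (q + 1) (p + 1) j
          - e p j * Δt * Φt (q + 1) p (j - 1)
          - f p j * Δt * Φt (q + 1) p (j + 1)
        = (1 - lam * Δt * Ihat) * Φt q p j
          + lam * Δt *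
            ∑ i ∈ Finset.Icc (-(J / 2 : ℤ)) (J / 2 : ℤ), Φt q (p + i) j * fbar i * Δx)
    (hbdry' : ∀ q < Tmax, ∀ p ∈ P \ S, ∀ j ∈ Vset, Φt (q + 1) p j = Φt q p j)
    -- temporal mesh condition (no condition on Δx, Δy)
    (hmesh : lam * Δt * Ihat ≤ 1)
    -- comparison of initial data
    (hinit : ∀ p ∈ P, ∀ j ∈ Vset, Φt 0 p j ≤ Φ 0 p j) :
    ∀ q ≤ Tmax, ∀ p ∈ P, ∀ j ∈ Vset, Φt q p j ≤ Φ q p j :=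
  stmt_13_general Δx Δy Δt k θ κ μ ξ lam hΔx hΔy hΔt hlam J N V fbar hfbar Ihat P S hP hS hSP x y hy
    Vset hV' c a b e f hc ha hb he hf Tmax Φ Φt hscheme hbdry hscheme' hbdry' hmesh hinit
end
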